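/- arXiv:2501.02791 — 2 statements merged into one kernel-verified Lean document; each statement's English description precedes it below -/
import Mathlib

section
/- Let (a_n) and (b_n) be sequences of nonnegative reals satisfying the recursion a_n ≤ a_{n−1}(1 − b_n a_{n−1}) for all n ≥ 1, with a_0 ≤ A. If additionally for all n, the geometric-mean bound (Π_{k=1}^n b_k^{-1/2})^{1/n} ≤ c ε_n holds with ε_n = n^{−1/2−α} for some α > 0, then a_n ≲ ε_n² = n^{−1−2α}, with implicit constant depending only on A, c, α. -/
/-!
While `a_n > 0`, the step `a_n ≤ a_{n-1} (1 - b_n a_{n-1})` gives `1/a_n ≥ 1/a_{n-1} + b_n`,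
since `(1 - x)(1 + x) ≤ 1`; telescoping, `∑_{k ≤ n} b_k ≤ 1/a_n`. By AM-GM that sum is at least
`n` times the geometric mean of the `b_k`, which is `n g_n⁻²` for the geometric mean `g_n` of the
`b_k^{-1/2}`. Hence `a_n ≤ g_n² / n ≤ c² n^{-1-2α}`.
-/

open Finset Real

theorem inv_add_le_inv_of_le_mul_one_sub {x y b : ℝ} (hx : 0 < x) (hy : 0 < y)
    (h : y ≤ x * (1 - b * x)) : x⁻¹ + b ≤ y⁻¹ := by
  have hstep : 0 < x * (1 - b * x) := hy.trans_le h
  have hprod : (x⁻¹ + b) * (x * (1 - b * x)) = 1 - (b * x) ^ 2 := by field_simp; ring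
  calc x⁻¹ + b ≤ 1 / (x * (1 - b * x)) := by
        rw [le_div_iff₀ hstep, hprod]
        nlinarith [sq_nonneg (b * x)]
    _ ≤ 1 / y := one_div_le_one_div_of_le hy h
    _ = y⁻¹ := one_div y

theorem sum_Icc_le_inv_of_le_mul_one_sub {a b : ℕ → ℝ} (ha : ∀ n, 0 ≤ a n)
    (hrec : ∀ n, a (n + 1) ≤ a n * (1 - b (n + 1) * a n)) {n : ℕ} (hn : 0 < a n) :
    ∑ k ∈ Icc 1 n, b k ≤ (a n)⁻¹ := by
  induction n with
  | zero => simpa using hn.le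
  | succ n ih =>
    have hprev : 0 < a n := by
      refine (ha n).lt_of_ne fun h0 => ?_
      have := hrec n
      rw [← h0, zero_mul] at this
      exact this.not_gt hn
    calc ∑ k ∈ Icc 1 (n + 1), b k = ∑ k ∈ Icc 1 n, b k + b (n + 1) :=
          sum_Icc_succ_top (by omega) b
      _ ≤ (a n)⁻¹ + b (n + 1) := by gcongr; exact ih hprev
      _ ≤ (a (n + 1))⁻¹ := inv_add_le_inv_of_le_mul_one_sub hprev hn (hrec n)

theorem card_mul_prod_rpow_inv_card_le_sum {ι : Type*} {s : Finset ι} {z : ι → ℝ}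
    (hz : ∀ i ∈ s, 0 ≤ z i) : #s * (∏ i ∈ s, z i) ^ (#s : ℝ)⁻¹ ≤ ∑ i ∈ s, z i := by
  rcases s.eq_empty_or_nonempty with rfl | hs
  · simp
  have hcard : (0 : ℝ) < #s := by exact_mod_cast hs.card_pos
  have := geom_mean_le_arith_mean s (fun _ => 1) z (fun _ _ => zero_le_one) (by simpa using hcard) hz
  simp only [rpow_one, sum_const, nsmul_eq_mul, mul_one, one_mul] at this
  rw [le_div_iff₀ hcard] at this
  linarith

theorem prod_rpow_neg_half_rpow_sq {ι : Type*} {s : Finset ι} {z : ι → ℝ}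
    (hz : ∀ i ∈ s, 0 ≤ z i) (p : ℝ) :
    ((∏ i ∈ s, z i ^ (-(1 : ℝ) / 2)) ^ p) ^ 2 = ((∏ i ∈ s, z i) ^ p)⁻¹ := by
  have hP : 0 ≤ ∏ i ∈ s, z i := prod_nonneg hz
  rw [finsetProd_rpow s z hz, ← rpow_mul hP, ← rpow_natCast, ← rpow_mul hP, ← rpow_neg hP]
  congr 1
  push_cast
  ring

theorem greedy_recursion_decay_general
    (a b : ℕ → ℝ) (c α : ℝ) (hc : 0 < c)
    (ha : ∀ n, 0 ≤ a n) (hb : ∀ n, 1 ≤ n → 0 < b n)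
    (hrec : ∀ n, 1 ≤ n → a n ≤ a (n - 1) * (1 - b n * a (n - 1)))
    (hgm : ∀ n : ℕ, 1 ≤ n →
      (∏ k ∈ Finset.Icc 1 n, (b k) ^ (-(1 : ℝ) / 2)) ^ ((n : ℝ)⁻¹)
        ≤ c * (n : ℝ) ^ (-(1 : ℝ) / 2 - α)) :
    ∃ C : ℝ, 0 < C ∧ ∀ n : ℕ, 1 ≤ n → a n ≤ C * (n : ℝ) ^ (-(1 : ℝ) - 2 * α) := by
  refine ⟨c ^ 2, by positivity, fun n hn => ?_⟩
  rcases (ha n).eq_or_lt with h0 | hpos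
  · rw [← h0]; positivity
  have hb' : ∀ k ∈ Icc 1 n, 0 < b k := fun k hk => hb k (mem_Icc.1 hk).1
  set g := (∏ k ∈ Icc 1 n, b k ^ (-(1 : ℝ) / 2)) ^ (n : ℝ)⁻¹
  have hg : 0 ≤ g := rpow_nonneg (prod_nonneg fun k hk => (rpow_pos_of_pos (hb' k hk) _).le) _
  have hsum : ∑ k ∈ Icc 1 n, b k ≤ (a n)⁻¹ :=
    sum_Icc_le_inv_of_le_mul_one_sub ha (fun m => by simpa using hrec (m + 1) m.succ_pos) hpos
  have hamgm := card_mul_prod_rpow_inv_card_le_sum (fun k hk => (hb' k hk).le)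
  rw [Nat.card_Icc, Nat.add_sub_cancel] at hamgm
  calc a n ≤ (n * (∏ k ∈ Icc 1 n, b k) ^ (n : ℝ)⁻¹)⁻¹ := by
        rw [le_inv_comm₀ hpos (mul_pos (by positivity) (rpow_pos_of_pos (prod_pos hb') _))]
        exact hamgm.trans hsum
    _ = g ^ 2 / n := by
        rw [prod_rpow_neg_half_rpow_sq (fun k hk => (hb' k hk).le), mul_inv, div_eq_inv_mul]
    _ ≤ g ^ 2 := div_le_self (by positivity) (by exact_mod_cast hn)
    _ ≤ (c * (n : ℝ) ^ (-(1 : ℝ) / 2 - α)) ^ 2 := pow_le_pow_left₀ hg (hgm n hn) 2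
    _ = c ^ 2 * (n : ℝ) ^ (-(1 : ℝ) - 2 * α) := by
        rw [mul_pow, ← rpow_mul_natCast (by positivity)]
        congr 2
        push_cast
        ring

/-- The recursion lemma behind the convergence of the (weak) orthogonal
greedy algorithm: if nonnegative sequences satisfy `a_n ≤ a_{n-1}(1 - b_n a_{n-1})`,
`a_0 ≤ A`, and the geometric-mean bound `(∏_{k=1}^n b_k^{-1/2})^{1/n} ≤ c n^{-1/2-α}`,
then `a_n ≲ n^{-1-2α}`. -/
theorem greedy_recursion_decay
    (a b : ℕ → ℝ) (A c α : ℝ) (hα : 0 < α) (hc : 0 < c)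
    (ha : ∀ n, 0 ≤ a n) (hb : ∀ n, 1 ≤ n → 0 < b n)
    (hrec : ∀ n, 1 ≤ n → a n ≤ a (n - 1) * (1 - b n * a (n - 1)))
    (ha0 : a 0 ≤ A)
    (hgm : ∀ n : ℕ, 1 ≤ n →
      (∏ k ∈ Finset.Icc 1 n, (b k) ^ (-(1 : ℝ) / 2)) ^ ((n : ℝ)⁻¹)
        ≤ c * (n : ℝ) ^ (-(1 : ℝ) / 2 - α)) :
    ∃ C : ℝ, 0 < C ∧ ∀ n : ℕ, 1 ≤ n → a n ≤ C * (n : ℝ) ^ (-(1 : ℝ) - 2 * α) :=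
  greedy_recursion_decay_general a b c α hc ha hb hrec hgm
end

section
/- Let H be a Hilbert space, 𝔻 ⊂ H a symmetric dictionary, and G ∈ L¹(𝔻). Run the weak orthogonal greedy algorithm with parameter γ ∈ (0,1]: at step n choose g_n ∈ 𝔻 with ⟨r_{n−1}, g_n⟩ ≥ γ sup_{g∈𝔻} ⟨r_{n−1}, g⟩, and set G_n = P_n G (projection onto span{g₁,…,g_n}), r_n = G − G_n. Then ‖r_{n−1}‖² ≤ (‖G‖_{L¹(𝔻)}/γ) · |⟨r_{n−1}, g_n − P_{n−1}g_n⟩|. -/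
open RealInnerProductSpace Pointwise

/-- The variation (gauge) norm of the closed convex hull of a dictionary `D`. -/
noncomputable def varNorm {H : Type*} [NormedAddCommGroup H] [InnerProductSpace ℝ H]
    (D : Set H) (v : H) : ℝ :=
  sInf {t : ℝ | 0 ≤ t ∧ v ∈ closure (convexHull ℝ (t • D))}

/-- One step of the weak orthogonal greedy algorithm with parameter
`γ ∈ (0,1]`: if `g_n ∈ 𝔻` satisfies `⟨r_{n-1}, g_n⟩ ≥ γ sup_{g∈𝔻} ⟨r_{n-1}, g⟩` where
`r_{n-1} = G - G_{n-1}` is the residual of the projection onto `H_{n-1}`, then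
`‖r_{n-1}‖² ≤ (‖G‖_{L¹(𝔻)}/γ) · |⟨r_{n-1}, g_n - P_{n-1} g_n⟩|`. -/
theorem woga_step_bound
    {H : Type*} [NormedAddCommGroup H] [InnerProductSpace ℝ H] [CompleteSpace H]
    (D : Set H) (hDne : D.Nonempty) (hDsymm : ∀ g ∈ D, -g ∈ D)
    (G : H)
    (hGmem : G ∈ closure (convexHull ℝ (varNorm D G • D)))
    (γ : ℝ) (hγ : γ ∈ Set.Ioc (0 : ℝ) 1)
    (Kprev : Submodule ℝ H) (Gprev gn p : H)
    -- `Gprev = P_{n-1} G` : orthogonal projection of `G` onto `H_{n-1}`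
    (hGprev : Gprev ∈ Kprev) (hGprevOrth : ∀ v ∈ Kprev, ⟪G - Gprev, v⟫ = 0)
    -- `p = P_{n-1} g_n`
    (hp : p ∈ Kprev) (hpOrth : ∀ v ∈ Kprev, ⟪gn - p, v⟫ = 0)
    -- weak greedy selection of `g_n ∈ 𝔻`
    (hgnD : gn ∈ D)
    (hbdd : BddAbove ((fun g => ⟪G - Gprev, g⟫) '' D))
    (hsel : γ * sSup ((fun g => ⟪G - Gprev, g⟫) '' D) ≤ ⟪G - Gprev, gn⟫) :
    ‖G - Gprev‖ ^ 2 ≤ (varNorm D G / γ) * |⟪G - Gprev, gn - p⟫| := by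

  obtain ⟨hγ0, -⟩ := hγ
  set r := G - Gprev with hr
  set t := varNorm D G with hT
  set S := sSup ((fun g => ⟪r, g⟫) '' D) with hS
  have ht0 : 0 ≤ t := Real.sInf_nonneg (fun x hx => hx.1)
  have hrp : ⟪r, p⟫ = 0 := hGprevOrth p hp
  have hrGprev : ⟪r, Gprev⟫ = 0 := hGprevOrth Gprev hGprev
  have hgn_eq : ⟪r, gn - p⟫ = ⟪r, gn⟫ := by
    rw [inner_sub_right, hrp]; ring
  -- S is nonneg
  have hS0 : 0 ≤ S := by
    obtain ⟨g, hg⟩ := hDne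
    rcases le_or_gt 0 ⟪r, g⟫ with h | h
    · exact le_trans h (le_csSup hbdd ⟨g, hg, rfl⟩)
    · have : (0:ℝ) ≤ ⟪r, -g⟫ := by rw [inner_neg_right]; linarith
      exact le_trans this (le_csSup hbdd ⟨-g, hDsymm g hg, rfl⟩)
  -- the halfspace
  have hC : G ∈ {x : H | ⟪r, x⟫ ≤ t * S} := by
    have hconv : Convex ℝ {x : H | ⟪r, x⟫ ≤ t * S} := by
      have := (convex_Iic (t * S)).linear_preimage (innerₛₗ ℝ r)
      exact this
    have hclosed : IsClosed {x : H | ⟪r, x⟫ ≤ t * S} :=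
      isClosed_le (continuous_const.inner continuous_id) continuous_const
    have hsub : (t • D) ⊆ {x : H | ⟪r, x⟫ ≤ t * S} := by
      rintro x ⟨g, hg, rfl⟩
      have : ⟪r, g⟫ ≤ S := le_csSup hbdd ⟨g, hg, rfl⟩
      simpa [real_inner_smul_right] using mul_le_mul_of_nonneg_left this ht0
    exact closure_minimal (convexHull_min hsub hconv) hclosed hGmem
  have hnorm : ‖r‖ ^ 2 = ⟪r, G⟫ := by
    have : ⟪r, G⟫ = ⟪r, r⟫ + ⟪r, Gprev⟫ := by
      rw [← inner_add_right]; congr 1; rw [hr]; abel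
    rw [this, hrGprev, real_inner_self_eq_norm_sq]; ring
  have h1 : ‖r‖ ^ 2 ≤ t * S := hnorm ▸ hC
  have h2 : S ≤ |⟪r, gn - p⟫| / γ := by
    rw [le_div_iff₀ hγ0, mul_comm]
    calc γ * S ≤ ⟪r, gn⟫ := hsel
      _ = ⟪r, gn - p⟫ := hgn_eq.symm
      _ ≤ |⟪r, gn - p⟫| := le_abs_self _
  calc ‖r‖ ^ 2 ≤ t * S := h1
    _ ≤ t * (|⟪r, gn - p⟫| / γ) := mul_le_mul_of_nonneg_left h2 ht0
    _ = (t / γ) * |⟪r, gn - p⟫| := by ring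
end
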